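/- arXiv:1603.08310 — 7 statements merged into one kernel-verified Lean document; each statement's English description precedes it below -/
import Mathlib

section
/- Let G₁ and G₂ be finite simple graphs. The following are equivalent: (i) for every natural number n, G₁ and G₂ have the same number of regular n-colorings (i.e., χ(G₁,t) = χ(G₂,t)); (ii) there exists a family of bijections f_S : χ(G₁,S) → χ(G₂,S), indexed by all sets S (in a fixed universe), which is natural with respect to injections, i.e., f_T(ι ∘ c) = ι ∘ f_S(c) for every injection ι : S → T and every c ∈ χ(G₁,S). -/
/-- The set `χ(G,S)` of regular `S`-colorings of `G`. -/
abbrev RegColoring {V : Type} (G : SimpleGraph V) (S : Type) : Type :=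
  {c : V → S // ∀ v u : V, G.Adj v u → c v ≠ c u}

/-- The action of the chromatic functor on an injection `ι : S → T`:
postcomposition `c ↦ ι ∘ c`. -/
def pushColoring {V : Type} (G : SimpleGraph V) {S T : Type} (ι : S → T)
    (hι : Function.Injective ι) (c : RegColoring G S) : RegColoring G T :=
  ⟨ι ∘ c.1, fun v u h hh => c.2 v u h (hι hh)⟩

/-!
Every regular `S`-coloring factors as a coloring onto `Fin k` followed by an injection
`Fin k ↪ S`, uniquely up to a permutation of `Fin k`. A family of `Perm (Fin k)`-equivariant
bijections between the surjective colorings of `G₁` and `G₂` onto `Fin k` therefore extends to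
a natural family of bijections. Such equivariant bijections exist as soon as the two sets of
surjective colorings have the same size, because `Perm (Fin k)` acts freely on them; and
these sizes are determined by the chromatic polynomial, since sorting the `n`-colorings by
their image gives the triangular system `χ(G, n) = ∑_{A ⊆ Fin n} surj(G, |A|)`.
-/

open Function

namespace MulAction

variable {G α β : Type} [Group G] [MulAction G α] [MulAction G β]

theorem bijective_smul_out_of_free (hfree : ∀ (g : G) (x : α), g • x = x → g = 1) :
    Bijective fun p : Quotient (orbitRel G α) × G => p.2 • p.1.out := by
  refine ⟨?_, fun x => ?_⟩
  · rintro ⟨q₁, g₁⟩ ⟨q₂, g₂⟩ h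
    dsimp only at h
    obtain rfl : q₁ = q₂ := by
      rw [← q₁.out_eq, ← q₂.out_eq]
      exact Quotient.sound ⟨g₁⁻¹ * g₂, by simp only [mul_smul, ← h, inv_smul_smul]⟩
    have : (g₂⁻¹ * g₁) • q₁.out = q₁.out := by rw [mul_smul, h, inv_smul_smul]
    exact Prod.ext rfl (inv_mul_eq_one.mp (hfree _ _ this)).symm
  · obtain ⟨g, hg⟩ : x ∈ orbit G (⟦x⟧ : Quotient (orbitRel G α)).out :=
      orbitRel_apply.mp ((orbitRel G α).symm (Quotient.mk_out x))
    exact ⟨(⟦x⟧, g), hg⟩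

theorem exists_equivariant_equiv_of_free [Finite G] [Finite α] [Finite β]
    (hα : ∀ (g : G) (x : α), g • x = x → g = 1) (hβ : ∀ (g : G) (x : β), g • x = x → g = 1)
    (hcard : Nat.card α = Nat.card β) :
    ∃ e : α ≃ β, ∀ (g : G) (x : α), e (g • x) = g • e x := by
  let Φα := Equiv.ofBijective _ (bijective_smul_out_of_free hα)
  let Φβ := Equiv.ofBijective _ (bijective_smul_out_of_free hβ)
  have hquot : Nat.card (Quotient (orbitRel G α)) = Nat.card (Quotient (orbitRel G β)) := by
    rw [← Nat.card_congr Φα, ← Nat.card_congr Φβ, Nat.card_prod, Nat.card_prod] at hcard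
    exact Nat.eq_of_mul_eq_mul_right Nat.card_pos hcard
  obtain ⟨φ⟩ := Finite.card_eq.mp hquot
  refine ⟨Φα.symm.trans ((φ.prodCongr (Equiv.refl G)).trans Φβ), fun g x => ?_⟩
  obtain ⟨⟨q, h⟩, rfl⟩ := Φα.surjective x
  have hsmul : g • Φα (q, h) = Φα (q, g * h) := (mul_smul g h q.out).symm
  simp [hsmul, Φβ, mul_smul]

end MulAction

section Colorings

variable {V : Type} (G : SimpleGraph V) {S T U : Type}

theorem pushColoring_pushColoring (ι : S → T) (hι : Injective ι) (κ : T → U) (hκ : Injective κ)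
    (c : RegColoring G S) :
    pushColoring G κ hκ (pushColoring G ι hι c) = pushColoring G (κ ∘ ι) (hκ.comp hι) c :=
  rfl

def regColoringCongr (e : S ≃ T) : RegColoring G S ≃ RegColoring G T where
  toFun := pushColoring G e e.injective
  invFun := pushColoring G e.symm e.symm.injective
  left_inv c := Subtype.ext (funext fun v => e.symm_apply_apply (c.1 v))
  right_inv c := Subtype.ext (funext fun v => e.apply_symm_apply (c.1 v))

abbrev SurjColoring (S : Type) : Type :=
  {c : RegColoring G S // Surjective c.1}

def surjColoringCongr (e : S ≃ T) : SurjColoring G S ≃ SurjColoring G T :=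
  (regColoringCongr G e).subtypeEquiv fun c => e.comp_surjective c.1 |>.symm

instance : MulAction (Equiv.Perm S) (SurjColoring G S) where
  smul σ c := surjColoringCongr G σ c
  one_smul _ := rfl
  mul_smul _ _ _ := rfl

variable {G}

theorem SurjColoring.eq_one_of_smul_eq (σ : Equiv.Perm S) (d : SurjColoring G S) (h : σ • d = d) :
    σ = 1 := by
  ext x
  obtain ⟨v, rfl⟩ := d.2 x
  exact congrArg (fun d : SurjColoring G S => d.1.1 v) h

def rangeFiberEquiv (A : Set S) :
    {c : RegColoring G S // Set.range c.1 = A} ≃ SurjColoring G A where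
  toFun c := ⟨⟨Set.codRestrict c.1.1 A (fun v => c.2.subset ⟨v, rfl⟩),
      fun v u h hh => c.1.2 v u h (congrArg Subtype.val hh)⟩,
    fun ⟨a, ha⟩ => by
      obtain ⟨v, rfl⟩ := c.2.symm.subset ha
      exact ⟨v, rfl⟩⟩
  invFun d := ⟨pushColoring G Subtype.val Subtype.val_injective d.1,
    (d.2.range_comp _).trans Subtype.range_coe⟩
  left_inv c := rfl
  right_inv d := rfl

theorem card_regColoring_eq_sum [Finite V] [Fintype S] [DecidableEq S] :
    Nat.card (RegColoring G S) = ∑ A : Set S, Nat.card (SurjColoring G A) := by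
  rw [← Nat.card_congr (Equiv.sigmaFiberEquiv fun c : RegColoring G S => Set.range c.1),
    Nat.card_sigma]
  exact Finset.sum_congr rfl fun A _ => Nat.card_congr (rangeFiberEquiv A)

end Colorings

section Counting

variable {V₁ V₂ : Type} [Finite V₁] [Finite V₂] {G₁ : SimpleGraph V₁} {G₂ : SimpleGraph V₂}

theorem card_surjColoring_fin_eq
    (h : ∀ n : ℕ, Nat.card (RegColoring G₁ (Fin n)) = Nat.card (RegColoring G₂ (Fin n)))
    (n : ℕ) : Nat.card (SurjColoring G₁ (Fin n)) = Nat.card (SurjColoring G₂ (Fin n)) := by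
  induction n using Nat.strong_induction_on with
  | _ n ih =>
  have hproper : ∀ A : Set (Fin n), A ≠ Set.univ →
      Nat.card (SurjColoring G₁ A) = Nat.card (SurjColoring G₂ A) := by
    intro A hA
    rw [Nat.card_congr (surjColoringCongr G₁ (Finite.equivFin A)),
      Nat.card_congr (surjColoringCongr G₂ (Finite.equivFin A))]
    exact ih _ (by simpa using Set.ncard_lt_card hA)
  have hn := h n
  rw [card_regColoring_eq_sum, card_regColoring_eq_sum,
    ← Finset.add_sum_erase _ _ (Finset.mem_univ Set.univ),
    ← Finset.add_sum_erase _ _ (Finset.mem_univ Set.univ),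
    Finset.sum_congr rfl fun A hA => hproper A (Finset.ne_of_mem_erase hA),
    Nat.card_congr (surjColoringCongr G₁ (Equiv.Set.univ _)),
    Nat.card_congr (surjColoringCongr G₂ (Equiv.Set.univ _))] at hn
  exact Nat.add_right_cancel hn

end Counting

section Extension

variable {V V₁ V₂ : Type} {G : SimpleGraph V} {G₁ : SimpleGraph V₁} {G₂ : SimpleGraph V₂}
  {S T T₁ T₂ : Type}

theorem exists_pushColoring_eq [Finite V] (c : RegColoring G S) :
    ∃ (k : ℕ) (j : Fin k → S) (hj : Injective j) (d : SurjColoring G (Fin k)),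
      pushColoring G j hj d.1 = c := by
  let e := Finite.equivFin (Set.range c.1)
  refine ⟨_, Subtype.val ∘ e.symm, Subtype.val_injective.comp e.symm.injective,
    surjColoringCongr G e (rangeFiberEquiv _ ⟨c, rfl⟩), Subtype.ext (funext fun v => ?_)⟩
  exact congrArg Subtype.val (e.symm_apply_apply _)

theorem exists_equiv_of_pushColoring_eq {j₁ : T₁ → S} (hj₁ : Injective j₁) {j₂ : T₂ → S}
    (hj₂ : Injective j₂) {d₁ : SurjColoring G T₁} {d₂ : SurjColoring G T₂}
    (h : pushColoring G j₁ hj₁ d₁.1 = pushColoring G j₂ hj₂ d₂.1) :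
    ∃ ψ : T₁ ≃ T₂, j₂ ∘ ψ = j₁ ∧ surjColoringCongr G ψ d₁ = d₂ := by
  have hcomp : j₁ ∘ d₁.1.1 = j₂ ∘ d₂.1.1 := congrArg Subtype.val h
  have hrange : Set.range j₁ = Set.range j₂ := by
    rw [← d₁.2.range_comp, ← d₂.2.range_comp, hcomp]
  let ψ := (Equiv.ofInjective j₁ hj₁).trans
    ((Equiv.setCongr hrange).trans (Equiv.ofInjective j₂ hj₂).symm)
  have hψ : j₂ ∘ ψ = j₁ := funext fun t => Equiv.apply_ofInjective_symm hj₂ _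
  refine ⟨ψ, hψ, Subtype.ext (Subtype.ext (funext fun v => hj₂ ?_))⟩
  exact (congrFun hψ _).trans (congrFun hcomp v)

variable (g : ∀ k, SurjColoring G₁ (Fin k) → SurjColoring G₂ (Fin k))

theorem pushColoring_map_eq_of_pushColoring_eq
    (hg : ∀ k (σ : Equiv.Perm (Fin k)) d, g k (σ • d) = σ • g k d)
    {k₁ k₂ : ℕ} {j₁ : Fin k₁ → S} (hj₁ : Injective j₁) {j₂ : Fin k₂ → S} (hj₂ : Injective j₂)
    {d₁ : SurjColoring G₁ (Fin k₁)} {d₂ : SurjColoring G₁ (Fin k₂)}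
    (h : pushColoring G₁ j₁ hj₁ d₁.1 = pushColoring G₁ j₂ hj₂ d₂.1) :
    pushColoring G₂ j₁ hj₁ (g k₁ d₁).1 = pushColoring G₂ j₂ hj₂ (g k₂ d₂).1 := by
  obtain ⟨ψ, hj, hd⟩ := exists_equiv_of_pushColoring_eq hj₁ hj₂ h
  obtain rfl := Fin.equiv_iff_eq.mp ⟨ψ⟩
  subst hj hd
  change _ = pushColoring G₂ j₂ hj₂ (g k₁ (ψ • d₁)).1
  rw [hg]
  rfl

theorem exists_factorization_pushColoring_map [Finite V₁] (c : RegColoring G₁ S) :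
    ∃ (c' : RegColoring G₂ S) (k : ℕ) (j : Fin k → S) (hj : Injective j)
      (d : SurjColoring G₁ (Fin k)),
      pushColoring G₁ j hj d.1 = c ∧ pushColoring G₂ j hj (g k d).1 = c' :=
  let ⟨k, j, hj, d, hc⟩ := exists_pushColoring_eq c
  ⟨_, k, j, hj, d, hc, rfl⟩

/-- Applies `g` to some factorization of `c`; the choice is irrelevant when `g` is equivariant
(`extendSurj_pushColoring`). -/
noncomputable def extendSurj [Finite V₁] (S : Type) (c : RegColoring G₁ S) : RegColoring G₂ S :=
  (exists_factorization_pushColoring_map g c).choose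

variable {g} [Finite V₁]

theorem extendSurj_pushColoring (hg : ∀ k (σ : Equiv.Perm (Fin k)) d, g k (σ • d) = σ • g k d)
    {k : ℕ} (j : Fin k → S) (hj : Injective j) (d : SurjColoring G₁ (Fin k)) :
    extendSurj g S (pushColoring G₁ j hj d.1) = pushColoring G₂ j hj (g k d).1 := by
  obtain ⟨k', j', hj', d', hc, hc'⟩ :=
    (exists_factorization_pushColoring_map g (pushColoring G₁ j hj d.1)).choose_spec
  rw [extendSurj, ← hc']
  exact pushColoring_map_eq_of_pushColoring_eq g hg hj' hj hc

theorem extendSurj_natural (hg : ∀ k (σ : Equiv.Perm (Fin k)) d, g k (σ • d) = σ • g k d)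
    (ι : S → T) (hι : Injective ι) (c : RegColoring G₁ S) :
    extendSurj g T (pushColoring G₁ ι hι c) = pushColoring G₂ ι hι (extendSurj g S c) := by
  obtain ⟨k, j, hj, d, rfl⟩ := exists_pushColoring_eq c
  rw [extendSurj_pushColoring hg, pushColoring_pushColoring, pushColoring_pushColoring,
    extendSurj_pushColoring hg]

theorem extendSurj_leftInverse [Finite V₂]
    (hg : ∀ k (σ : Equiv.Perm (Fin k)) d, g k (σ • d) = σ • g k d)
    {g' : ∀ k, SurjColoring G₂ (Fin k) → SurjColoring G₁ (Fin k)}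
    (hg' : ∀ k (σ : Equiv.Perm (Fin k)) d, g' k (σ • d) = σ • g' k d)
    (hinv : ∀ k, LeftInverse (g' k) (g k)) (S : Type) :
    LeftInverse (extendSurj g' S) (extendSurj g S) := by
  intro c
  obtain ⟨k, j, hj, d, rfl⟩ := exists_pushColoring_eq c
  rw [extendSurj_pushColoring hg, extendSurj_pushColoring hg', hinv]

end Extension

/-- For finite simple graphs `G₁, G₂`, the following are equivalent: (i) for every `n`,
`G₁` and `G₂` have the same number of regular `n`-colorings; (ii) there is a family of
bijections `f_S : χ(G₁,S) → χ(G₂,S)`, indexed by all sets `S` in a fixed universe, natural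
with respect to injections. -/
theorem stmt4 {V₁ V₂ : Type} [Fintype V₁] [Fintype V₂]
    (G₁ : SimpleGraph V₁) (G₂ : SimpleGraph V₂) :
    (∀ n : ℕ, Nat.card (RegColoring G₁ (Fin n)) = Nat.card (RegColoring G₂ (Fin n))) ↔
    (∃ f : ∀ S : Type, RegColoring G₁ S → RegColoring G₂ S,
      (∀ S : Type, Function.Bijective (f S)) ∧
      ∀ (S T : Type) (ι : S → T) (hι : Function.Injective ι) (c : RegColoring G₁ S),
        f T (pushColoring G₁ ι hι c) = pushColoring G₂ ι hι (f S c)) := by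
  constructor
  · intro h
    choose e he using fun k => MulAction.exists_equivariant_equiv_of_free
      SurjColoring.eq_one_of_smul_eq SurjColoring.eq_one_of_smul_eq (card_surjColoring_fin_eq h k)
    have he_symm : ∀ k (σ : Equiv.Perm (Fin k)) d, (e k).symm (σ • d) = σ • (e k).symm d :=
      fun k σ d => (e k).symm_apply_eq.mpr (by rw [he, Equiv.apply_symm_apply])
    refine ⟨extendSurj fun k => e k, fun S => ⟨?_, ?_⟩, fun S T ι hι => extendSurj_natural he ι hι⟩
    · exact (extendSurj_leftInverse he he_symm (fun k => (e k).left_inv) S).injective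
    · exact (extendSurj_leftInverse he_symm he (fun k => (e k).right_inv) S).surjective
  · rintro ⟨f, hf, -⟩ n
    exact Nat.card_eq_of_bijective _ (hf _)
end

section
/- Let 𝔛 = (X_i)_{i∈I} and 𝔜 = (Y_j)_{j∈J} be families of sets. There is a bijection between Isom(𝔛,𝔜) — the set of pairs (α;(α_i)_{i∈I}) where α : I → J is a bijection and each α_i : X_i → Y_{α(i)} is a bijection — and the set of natural isomorphisms from F_𝔛 to F_𝔜, where F_𝔛 assigns to a set S the disjoint union ⨆_{i∈I} Inj(X_i,S) and to an injection ι : S → T the map given by postcomposition with ι, and a natural isomorphism F_𝔛 → F_𝔜 is a family of bijections f_S : F_𝔛(S) → F_𝔜(S), indexed by all sets S, satisfying f_T ∘ ι_* = ι_* ∘ f_S for every injection ι : S → T. The bijection sends (α;(α_i)) to the natural isomorphism whose component at S maps c ∈ Inj(X_i,S) to c ∘ α_i⁻¹ ∈ Inj(Y_{α(i)},S). -/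
/-- The value `F_𝔛(S) = ⨆_{i∈I} Inj(X_i, S)` of the functor associated to a family of
sets `𝔛 = (X_i)_{i∈I}`. -/
abbrev FamFunctor {I : Type} (X : I → Type) (S : Type) : Type :=
  Σ i : I, {f : X i → S // Function.Injective f}

/-- The action of `F_𝔛` on an injection `ι : S → T`: postcomposition with `ι` on each
summand. -/
def famMap {I : Type} (X : I → Type) {S T : Type} (ι : S → T) (hι : Function.Injective ι)
    (x : FamFunctor X S) : FamFunctor X T :=
  ⟨x.1, ⟨ι ∘ x.2.1, hι.comp x.2.2⟩⟩

/-- An isomorphism of families of sets: a bijection `α : I → J` together with bijections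
`α_i : X_i → Y_{α(i)}`. -/
abbrev FamIsom {I J : Type} (X : I → Type) (Y : J → Type) : Type :=
  Σ α : I ≃ J, ∀ i : I, X i ≃ Y (α i)

/-- A natural isomorphism `F_𝔛 → F_𝔜`: a family of bijections `f_S`, indexed by all
sets `S`, commuting with postcomposition by injections. -/
abbrev NatIsoFam {I J : Type} (X : I → Type) (Y : J → Type) : Type 1 :=
  {f : ∀ S : Type, FamFunctor X S → FamFunctor Y S //
    (∀ S : Type, Function.Bijective (f S)) ∧
    ∀ (S T : Type) (ι : S → T) (hι : Function.Injective ι) (x : FamFunctor X S),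
      f T (famMap X ι hι x) = famMap Y ι hι (f S x)}

/-!
A natural transformation `f : F_𝔛 → F_𝔜` is determined by where it sends the identity of
`X_i` in `Inj(X_i, X_i)` (Yoneda): if that image is the injection `u_i : Y_{α(i)} → X_i`, then
`f` maps `c ∈ Inj(X_i, S)` to `c ∘ u_i`. Applying this to `f` and to its inverse `g`, the identity
`g (f id) = id` gives `α` a left inverse and forces `u_i` to be surjective. So a natural
isomorphism comes from the isomorphism of families `(α; u_i⁻¹)`, and this is inverse to the
construction `c ↦ c ∘ α_i⁻¹`.
-/

namespace FamFunctor

variable {K : Type} (Z : K → Type)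

def univ (k : K) : FamFunctor Z (Z k) :=
  ⟨k, ⟨id, Function.injective_id⟩⟩

variable {Z}

theorem surjective_of_mk_eq_univ {k k' : K} {c : Z k' → Z k} {hc : Function.Injective c}
    (h : (⟨k', ⟨c, hc⟩⟩ : FamFunctor Z (Z k)) = univ Z k) : Function.Surjective c := by
  obtain ⟨rfl, h⟩ := Sigma.mk.inj_iff.mp h
  obtain rfl : c = id := congrArg Subtype.val (eq_of_heq h)
  exact Function.surjective_id

end FamFunctor

open FamFunctor

variable {I J : Type} {X : I → Type} {Y : J → Type}

theorem FamIsom.ext {a b : FamIsom X Y} (h₁ : a.1 = b.1) (h₂ : ∀ i x, a.2 i x ≍ b.2 i x) :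
    a = b := by
  obtain ⟨e, s⟩ := a
  obtain ⟨e', s'⟩ := b
  subst h₁
  congr
  funext i
  exact Equiv.ext fun x => eq_of_heq (h₂ i x)

namespace NatIsoFam

theorem apply_mk (f : NatIsoFam X Y) {S : Type} (i : I) (c : X i → S)
    (hc : Function.Injective c) :
    f.1 S ⟨i, ⟨c, hc⟩⟩ = famMap Y c hc (f.1 (X i) (univ X i)) :=
  f.2.2 (X i) S c hc (univ X i)

noncomputable def inv (f : NatIsoFam X Y) : NatIsoFam Y X :=
  ⟨fun S => (Equiv.ofBijective _ (f.2.1 S)).symm,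
    fun S => (Equiv.ofBijective _ (f.2.1 S)).symm.bijective,
    fun S T ι hι y => (Equiv.ofBijective _ (f.2.1 T)).symm_apply_eq.mpr <| by
      rw [Equiv.ofBijective_apply, f.2.2, ← Equiv.ofBijective_apply _ (f.2.1 S),
        Equiv.apply_symm_apply]⟩

theorem inv_apply_apply (f : NatIsoFam X Y) (S : Type) (x : FamFunctor X S) :
    f.inv.1 S (f.1 S x) = x :=
  (Equiv.ofBijective _ (f.2.1 S)).symm_apply_apply x

theorem apply_inv_apply (f : NatIsoFam X Y) (S : Type) (y : FamFunctor Y S) :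
    f.1 S (f.inv.1 S y) = y :=
  (Equiv.ofBijective _ (f.2.1 S)).apply_symm_apply y

def index (f : NatIsoFam X Y) (i : I) : J :=
  (f.1 (X i) (univ X i)).1

def component (f : NatIsoFam X Y) (i : I) : Y (f.index i) → X i :=
  (f.1 (X i) (univ X i)).2.1

theorem component_injective (f : NatIsoFam X Y) (i : I) : Function.Injective (f.component i) :=
  (f.1 (X i) (univ X i)).2.2

theorem mk_index_index_eq_univ {f : NatIsoFam X Y} {g : NatIsoFam Y X}
    (hgf : ∀ S x, g.1 S (f.1 S x) = x) (i : I) :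
    (⟨g.index (f.index i), ⟨f.component i ∘ g.component (f.index i),
      (f.component_injective i).comp (g.component_injective _)⟩⟩ : FamFunctor X (X i)) =
      univ X i :=
  (g.apply_mk _ _ (f.component_injective i)).symm.trans (hgf _ _)

theorem index_index {f : NatIsoFam X Y} {g : NatIsoFam Y X}
    (hgf : ∀ S x, g.1 S (f.1 S x) = x) (i : I) : g.index (f.index i) = i :=
  congrArg Sigma.fst (mk_index_index_eq_univ hgf i)

theorem component_surjective {f : NatIsoFam X Y} {g : NatIsoFam Y X}
    (hgf : ∀ S x, g.1 S (f.1 S x) = x) (i : I) : Function.Surjective (f.component i) :=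
  (surjective_of_mk_eq_univ (mk_index_index_eq_univ hgf i)).of_comp

noncomputable def toFamIsom (f : NatIsoFam X Y) : FamIsom X Y :=
  ⟨⟨f.index, f.inv.index, index_index f.inv_apply_apply, index_index f.apply_inv_apply⟩,
    fun i => (Equiv.ofBijective _
      ⟨f.component_injective i, component_surjective f.inv_apply_apply i⟩).symm⟩

end NatIsoFam

def FamIsom.famFunctorEquiv (a : FamIsom X Y) (S : Type) : FamFunctor X S ≃ FamFunctor Y S :=
  Equiv.sigmaCongr a.1 fun i =>
    (Equiv.arrowCongr (a.2 i) (Equiv.refl S)).subtypeEquiv fun c =>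
      ((a.2 i).symm.injective_comp c).symm

def FamIsom.toNatIsoFam (a : FamIsom X Y) : NatIsoFam X Y :=
  ⟨fun S => a.famFunctorEquiv S, fun S => (a.famFunctorEquiv S).bijective,
    fun _ _ _ _ _ => rfl⟩

theorem FamIsom.toFamIsom_toNatIsoFam (a : FamIsom X Y) : a.toNatIsoFam.toFamIsom = a :=
  FamIsom.ext (Equiv.ext fun _ => rfl) fun i x => heq_of_eq <|
    (Equiv.ofBijective _ _).symm_apply_eq.mpr ((a.2 i).symm_apply_apply x).symm

theorem NatIsoFam.toNatIsoFam_toFamIsom (f : NatIsoFam X Y) : f.toFamIsom.toNatIsoFam = f := by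
  refine Subtype.ext (funext fun S => funext fun ⟨i, c, hc⟩ => ?_)
  rw [f.apply_mk]
  rfl

/-- There is a bijection between `Isom(𝔛,𝔜)` and the set of natural isomorphisms
`F_𝔛 → F_𝔜`, sending `(α;(α_i))` to the natural isomorphism whose component at `S` maps
`c ∈ Inj(X_i,S)` to `c ∘ α_i⁻¹ ∈ Inj(Y_{α(i)},S)`. -/
theorem stmt5 {I J : Type} (X : I → Type) (Y : J → Type) :
    ∃ B : FamIsom X Y ≃ NatIsoFam X Y,
      ∀ (a : FamIsom X Y) (S : Type) (x : FamFunctor X S),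
        (B a).1 S x =
          ⟨a.1 x.1, ⟨x.2.1 ∘ ⇑(a.2 x.1).symm, x.2.2.comp (a.2 x.1).symm.injective⟩⟩ :=
  ⟨⟨FamIsom.toNatIsoFam, NatIsoFam.toFamIsom, FamIsom.toFamIsom_toNatIsoFam,
    NatIsoFam.toNatIsoFam_toFamIsom⟩, fun _ _ _ => rfl⟩
end

section
/- Let 𝔛 = (X_i)_{i∈I} be a family of sets. The automorphism group Aut(𝔛) — pairs (α;(α_i)_{i∈I}) of a bijection α : I → I and bijections α_i : X_i → X_{α(i)}, under composition — is isomorphic as a group to the group Aut(F_𝔛) of natural automorphisms of the functor F_𝔛, i.e., families of bijections f_S : F_𝔛(S) → F_𝔛(S), indexed by all sets S, satisfying f_T ∘ ι_* = ι_* ∘ f_S for every injection ι : S → T, under componentwise composition. -/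
/-- An automorphism of the family `𝔛`: a bijection `α : I → I` together with bijections
`α_i : X_i → X_{α(i)}`. -/
abbrev FamAut {I : Type} (X : I → Type) : Type :=
  Σ α : I ≃ I, ∀ i : I, X i ≃ X (α i)

/-- Composition in `Aut(𝔛)`: `(β;(β_i)) ∘ (α;(α_i)) = (β∘α; (β_{α(i)}∘α_i))`. -/
def famComp {I : Type} {X : I → Type} (a b : FamAut X) : FamAut X :=
  ⟨b.1.trans a.1, fun i => (b.2 i).trans (a.2 (b.1 i))⟩

/-- A natural automorphism of `F_𝔛`: a family of bijections `f_S`, indexed by all sets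
`S`, commuting with postcomposition by injections. -/
abbrev NatAutFam {I : Type} (X : I → Type) : Type 1 :=
  {f : ∀ S : Type, FamFunctor X S → FamFunctor X S //
    (∀ S : Type, Function.Bijective (f S)) ∧
    ∀ (S T : Type) (ι : S → T) (hι : Function.Injective ι) (x : FamFunctor X S),
      f T (famMap X ι hι x) = famMap X ι hι (f S x)}

/-- Componentwise composition of natural automorphisms of `F_𝔛`. -/
def natComp {I : Type} {X : I → Type} (f g : NatAutFam X) : NatAutFam X :=
  ⟨fun S => f.1 S ∘ g.1 S,
   ⟨fun S => (f.2.1 S).comp (g.2.1 S),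
    fun S T ι hι x => by
      show f.1 T (g.1 T (famMap X ι hι x)) = famMap X ι hι (f.1 S (g.1 S x))
      rw [g.2.2 S T ι hι x, f.2.2 S T ι hι (g.1 S x)]⟩⟩

/-!
A natural transformation out of `F_𝔛 = ⨆ᵢ Inj(X_i, -)` is determined, by the Yoneda lemma, by its
values on the generic elements `(i, id) ∈ F_𝔛(X_i)`; a natural automorphism `f` sends `(i, id)` to
some `(σ i, u_i)` with `u_i : X_{σ i} ↪ X_i`. Applying the (again natural) inverse of `f` to
`(σ i, u_i) = u_i ∘ (σ i, id)` recovers `(i, id)`, which forces `σ` to be invertible and every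
`u_i` to be surjective, so `(σ; (u_i⁻¹))` is an automorphism of `𝔛`. Conversely `(α; (α_i))` acts
on `F_𝔛(S)` by `(i, c) ↦ (α i, c ∘ α_i⁻¹)`, and these constructions are mutually inverse and
multiplicative.
-/

open Function

namespace FamFunctor

variable {I : Type} {X : I → Type}

def gen (X : I → Type) (i : I) : FamFunctor X (X i) :=
  ⟨i, ⟨id, injective_id⟩⟩

theorem fst_eq_and_surjective_of_famMap_eq_gen {S : Type} {i : I} {c : S → X i}
    (hc : Injective c) {y : FamFunctor X S} (h : famMap X c hc y = gen X i) :
    y.1 = i ∧ Surjective c := by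
  obtain ⟨j, v, hv⟩ := y
  obtain ⟨rfl, hcv⟩ := Sigma.mk.inj_iff.mp h
  have hcomp : c ∘ v = id := congrArg Subtype.val (eq_of_heq hcv)
  exact ⟨rfl, fun x => ⟨v x, congrFun hcomp x⟩⟩

def IsNatural (f : ∀ S : Type, FamFunctor X S → FamFunctor X S) : Prop :=
  ∀ (S T : Type) (ι : S → T) (hι : Injective ι) (x : FamFunctor X S),
    f T (famMap X ι hι x) = famMap X ι hι (f S x)

namespace IsNatural

variable {f g : ∀ S : Type, FamFunctor X S → FamFunctor X S}

theorem apply_eq_famMap_gen (hf : IsNatural f) {S : Type} (x : FamFunctor X S) :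
    f S x = famMap X x.2.1 x.2.2 (f _ (gen X x.1)) :=
  hf _ _ x.2.1 x.2.2 (gen X x.1)

theorem of_rightInverse (hf : IsNatural f) (hinj : ∀ S, Injective (f S))
    (hg : ∀ S, RightInverse (g S) (f S)) : IsNatural g :=
  fun S T ι hι x => hinj T (by rw [hg T, hf, hg S])

theorem fst_gen_and_surjective (hg : IsNatural g) (hgf : ∀ S, LeftInverse (g S) (f S)) (i : I) :
    (g _ (gen X (f _ (gen X i)).1)).1 = i ∧ Surjective (f _ (gen X i)).2.1 :=
  fst_eq_and_surjective_of_famMap_eq_gen _ <| (hg _ _ _ (f _ (gen X i)).2.2 _).symm.trans (hgf _ _)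

end IsNatural

end FamFunctor

open FamFunctor

def Equiv.subtypeInjectiveCongrLeft {A B : Type} (e : A ≃ B) (S : Type) :
    {c : A → S // Injective c} ≃ {c : B → S // Injective c} where
  toFun c := ⟨c.1 ∘ e.symm, c.2.comp e.symm.injective⟩
  invFun c := ⟨c.1 ∘ e, c.2.comp e.injective⟩
  left_inv c := Subtype.ext (funext fun x => congrArg c.1 (e.symm_apply_apply x))
  right_inv c := Subtype.ext (funext fun x => congrArg c.1 (e.apply_symm_apply x))

namespace FamAut

variable {I : Type} {X : I → Type}

def act (a : FamAut X) (S : Type) : FamFunctor X S → FamFunctor X S :=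
  Sigma.map a.1 fun i => (a.2 i).subtypeInjectiveCongrLeft S

theorem act_bijective (a : FamAut X) (S : Type) : Bijective (a.act S) :=
  ⟨a.1.injective.sigma_map fun _ => Equiv.injective _,
    a.1.surjective.sigma_map fun _ => Equiv.surjective _⟩

def toNatAut (a : FamAut X) : NatAutFam X :=
  ⟨a.act, a.act_bijective, fun _ _ _ _ _ => rfl⟩

theorem toNatAut_famComp (a b : FamAut X) :
    toNatAut (famComp a b) = natComp (toNatAut a) (toNatAut b) :=
  rfl

theorem toNatAut_injective : Injective (toNatAut (X := X)) := by
  rintro ⟨α, u⟩ ⟨β, v⟩ h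
  have hgen (i : I) := congrFun (congrFun (congrArg Subtype.val h) (X i)) (gen X i)
  obtain rfl : α = β := Equiv.ext fun i => congrArg Sigma.fst (hgen i)
  have hsymm (i : I) : (u i).symm = (v i).symm :=
    Equiv.coe_fn_injective (congrArg Subtype.val (eq_of_heq (Sigma.mk.inj_iff.mp (hgen i)).2))
  rw [funext fun i => Equiv.symm_bijective.injective (hsymm i)]

end FamAut

namespace NatAutFam

variable {I : Type} {X : I → Type} (f : NatAutFam X)

theorem isNatural : IsNatural f.1 :=
  f.2.2

noncomputable def equiv (S : Type) : FamFunctor X S ≃ FamFunctor X S :=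
  Equiv.ofBijective (f.1 S) (f.2.1 S)

theorem isNatural_symm : IsNatural fun S => (f.equiv S).symm :=
  f.isNatural.of_rightInverse (fun S => (f.2.1 S).1) fun S => (f.equiv S).apply_symm_apply

theorem fst_symm_gen_fst_gen (i : I) : ((f.equiv _).symm (gen X (f.1 _ (gen X i)).1)).1 = i :=
  (f.isNatural_symm.fst_gen_and_surjective (fun S => (f.equiv S).symm_apply_apply) i).1

theorem fst_gen_fst_symm_gen (i : I) : (f.1 _ (gen X ((f.equiv _).symm (gen X i)).1)).1 = i :=
  (f.isNatural.fst_gen_and_surjective (fun S => (f.equiv S).apply_symm_apply) i).1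

theorem surjective_gen_snd (i : I) : Surjective (f.1 _ (gen X i)).2.1 :=
  (f.isNatural_symm.fst_gen_and_surjective (fun S => (f.equiv S).symm_apply_apply) i).2

noncomputable def toFamAut : FamAut X :=
  ⟨⟨fun i => (f.1 _ (gen X i)).1, fun i => ((f.equiv _).symm (gen X i)).1,
      f.fst_symm_gen_fst_gen, f.fst_gen_fst_symm_gen⟩,
    fun i => (Equiv.ofBijective _ ⟨(f.1 _ (gen X i)).2.2, f.surjective_gen_snd i⟩).symm⟩

theorem toNatAut_toFamAut : FamAut.toNatAut f.toFamAut = f := by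
  refine Subtype.ext (funext fun S => funext fun x => ?_)
  rw [f.isNatural.apply_eq_famMap_gen x]
  rfl

end NatAutFam

/-- `Aut(𝔛)` is isomorphic as a group to the group `Aut(F_𝔛)` of natural automorphisms
of the functor `F_𝔛` (both taken with their composition operations). -/
theorem stmt6 {I : Type} (X : I → Type) :
    ∃ e : FamAut X ≃ NatAutFam X,
      ∀ a b : FamAut X, e (famComp a b) = natComp (e a) (e b) :=
  ⟨Equiv.ofBijective FamAut.toNatAut
      ⟨FamAut.toNatAut_injective, fun f => ⟨f.toFamAut, f.toNatAut_toFamAut⟩⟩,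
    FamAut.toNatAut_famComp⟩
end

section
/- Let G = (V,E) be a (possibly infinite) simple graph. The group Aut(χ(G,•)) of natural automorphisms of the chromatic functor of G is isomorphic to the direct product over all cardinal numbers κ of the wreath products 𝔖_κ ≀ 𝔖_{n_κ}, where n_κ is the cardinality of the set St_κ(G) of stable partitions of G of cardinality κ, 𝔖_κ is the symmetric group on a set of cardinality κ, and 𝔖_κ ≀ 𝔖_{n_κ} is the semidirect product (∏_{St_κ(G)} 𝔖_κ) ⋊ 𝔖_{St_κ(G)} with the symmetric group on St_κ(G) permuting coordinates. -/
/-- A stable partition of a simple graph `G`. -/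
def IsStablePartition {V : Type} (G : SimpleGraph V) (P : Set (Set V)) : Prop :=
  Setoid.IsPartition P ∧ ∀ b ∈ P, ∀ v ∈ b, ∀ u ∈ b, ¬ G.Adj v u

/-- A natural automorphism of the chromatic functor `χ(G,•)`: a family of bijections
`f_S : χ(G,S) → χ(G,S)`, indexed by all sets `S`, natural with respect to injections. -/
abbrev ChromNatAut {V : Type} (G : SimpleGraph V) : Type 1 :=
  {f : ∀ S : Type, RegColoring G S → RegColoring G S //
    (∀ S : Type, Function.Bijective (f S)) ∧
    ∀ (S T : Type) (ι : S → T) (hι : Function.Injective ι) (c : RegColoring G S),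
      f T (pushColoring G ι hι c) = pushColoring G ι hι (f S c)}

/-- Componentwise composition in `Aut(χ(G,•))`. -/
def chromComp {V : Type} {G : SimpleGraph V} (f g : ChromNatAut G) : ChromNatAut G :=
  ⟨fun S => f.1 S ∘ g.1 S,
   ⟨fun S => (f.2.1 S).comp (g.2.1 S),
    fun S T ι hι c => by
      show f.1 T (g.1 T (pushColoring G ι hι c)) = pushColoring G ι hι (f.1 S (g.1 S c))
      rw [g.2.2 S T ι hι c, f.2.2 S T ι hι (g.1 S c)]⟩⟩

/-- A permutation `σ` of `ι` acts on the product group `ι → G` by permuting coordinates. -/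
def permAut {ι : Type} (G : Type) [Group G] (σ : Equiv.Perm ι) : MulAut (ι → G) :=
  { toFun := fun f => f ∘ ⇑σ.symm
    invFun := fun f => f ∘ ⇑σ
    left_inv := fun f => by funext i; simp
    right_inv := fun f => by funext i; simp
    map_mul' := fun f g => rfl }

/-- The action of the symmetric group on `ι` on the product group `ι → G` permuting
coordinates, as a homomorphism into the automorphism group. -/
def permPiHom (ι : Type) (G : Type) [Group G] : Equiv.Perm ι →* MulAut (ι → G) where
  toFun := permAut G
  map_one' := by apply MulEquiv.ext; intro f; rfl
  map_mul' := fun σ τ => by apply MulEquiv.ext; intro f; rfl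

/-- The wreath product `𝔖_κ ≀ 𝔖_{St_κ(G)} = (∏_{St_κ(G)} 𝔖_κ) ⋊ 𝔖_{St_κ(G)}`, where
`St_κ(G)` is the set of stable partitions of `G` of cardinality `κ` and `𝔖_κ` is the
symmetric group on a set of cardinality `κ`. -/
abbrev stWreath {V : Type} (G : SimpleGraph V) (κ : Cardinal.{0}) : Type :=
  SemidirectProduct
    ({P : Set (Set V) // IsStablePartition G P ∧ Cardinal.mk P = κ} → Equiv.Perm (Quotient.out κ))
    (Equiv.Perm {P : Set (Set V) // IsStablePartition G P ∧ Cardinal.mk P = κ})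
    (permPiHom _ _)

instance stWreath.instGroup {V : Type} (G : SimpleGraph V) (κ : Cardinal.{0}) :
    Group (stWreath G κ) :=
  SemidirectProduct.instGroup

/-!
A regular `S`-coloring is the same as a stable partition `P` (its color classes) together with
an injection `P → S`. Naturality with respect to injections therefore determines a natural
transformation `t` by its values on the tautological colorings of stable partitions `P` (those
whose colors are the blocks of `P`); such a value is a stable partition `Q(P)` with an injection
`Q(P) → P`. When `t` is invertible, `P ↦ Q(P)` is a permutation of the stable partitions, the
injections are bijections, so `#Q(P) = #P`, and after identifying every block set of cardinality
`κ` with the fixed set `κ.out` these data are exactly an element of `∏ κ, 𝔖_κ ≀ 𝔖_{St_κ(G)}`.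
Composition of transformations matches the semidirect product multiplication.
-/

open Function

namespace RegColoring

variable {V S : Type} {G : SimpleGraph V} (c : RegColoring G S)

def colorClass (v : V) : Set V := {u | c.1 u = c.1 v}

def colorClasses : Set (Set V) := Set.range c.colorClass

lemma mem_colorClass_self (v : V) : v ∈ c.colorClass v := rfl

lemma colorClass_eq_of_apply_eq {u v : V} (h : c.1 u = c.1 v) :
    c.colorClass u = c.colorClass v := by
  simp only [colorClass, h]

theorem isStablePartition_colorClasses : IsStablePartition G c.colorClasses := by
  refine ⟨⟨?_, fun v => ⟨c.colorClass v, ⟨⟨v, rfl⟩, c.mem_colorClass_self v⟩, ?_⟩⟩, ?_⟩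
  · rintro ⟨v, hv⟩
    exact (hv ▸ c.mem_colorClass_self v : v ∈ (∅ : Set V))
  · rintro b ⟨⟨u, rfl⟩, hvu⟩
    exact c.colorClass_eq_of_apply_eq hvu.symm
  · rintro b ⟨u, rfl⟩ x hx y hy hxy
    exact c.2 x y hxy (hx.trans hy.symm)

noncomputable def classColor (b : c.colorClasses) : S := c.1 (Set.mem_range.mp b.2).choose

lemma classColor_eq_of_mem (b : c.colorClasses) {v : V} (hv : v ∈ (b : Set V)) :
    c.classColor b = c.1 v := by
  rw [← (Set.mem_range.mp b.2).choose_spec] at hv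
  exact hv.symm

lemma classColor_injective : Injective c.classColor := by
  intro b b' h
  have key (b : c.colorClasses) : c.colorClass (Set.mem_range.mp b.2).choose = b :=
    (Set.mem_range.mp b.2).choose_spec
  exact Subtype.ext ((key b).symm.trans ((c.colorClass_eq_of_apply_eq h).trans (key b')))

end RegColoring

namespace IsStablePartition

variable {V S : Type} {G : SimpleGraph V} {P : Set (Set V)} (hP : IsStablePartition G P)

noncomputable def blockOf (v : V) : P := ⟨(hP.1.2 v).choose, (hP.1.2 v).choose_spec.1.1⟩

lemma mem_blockOf (v : V) : v ∈ (hP.blockOf v : Set V) := (hP.1.2 v).choose_spec.1.2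

lemma blockOf_eq_of_mem {v : V} {b : Set V} (hb : b ∈ P) (hv : v ∈ b) :
    hP.blockOf v = ⟨b, hb⟩ :=
  Subtype.ext ((hP.1.2 v).choose_spec.2 b ⟨hb, hv⟩).symm

noncomputable def coloring (j : P → S) (hj : Injective j) : RegColoring G S :=
  ⟨fun v => j (hP.blockOf v), fun v u hvu hj_eq => by
    refine hP.2 _ (hP.blockOf v).2 v (hP.mem_blockOf v) u ?_ hvu
    rw [hj hj_eq]
    exact hP.mem_blockOf u⟩

variable {j : P → S} {hj : Injective j}

lemma coloring_apply_of_mem {v : V} {b : Set V} (hb : b ∈ P) (hv : v ∈ b) :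
    (hP.coloring j hj).1 v = j ⟨b, hb⟩ :=
  congrArg j (hP.blockOf_eq_of_mem hb hv)

lemma colorClass_coloring (v : V) :
    (hP.coloring j hj).colorClass v = hP.blockOf v := by
  ext u
  refine ⟨fun h => (hj h).symm ▸ hP.mem_blockOf u, fun hu => ?_⟩
  exact congrArg j (hP.blockOf_eq_of_mem (hP.blockOf v).2 hu)

lemma colorClasses_coloring : (hP.coloring j hj).colorClasses = P := by
  ext b
  refine ⟨?_, fun hb => ?_⟩
  · rintro ⟨v, rfl⟩
    rw [colorClass_coloring]
    exact (hP.blockOf v).2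
  · obtain ⟨v, hv⟩ := Setoid.nonempty_of_mem_partition hP.1 hb
    exact ⟨v, by rw [colorClass_coloring, hP.blockOf_eq_of_mem hb hv]⟩

lemma classColor_coloring {b : Set V} (h₁ : b ∈ (hP.coloring j hj).colorClasses) (h₂ : b ∈ P) :
    (hP.coloring j hj).classColor ⟨b, h₁⟩ = j ⟨b, h₂⟩ := by
  obtain ⟨v, hv⟩ := Setoid.nonempty_of_mem_partition hP.1 h₂
  rw [RegColoring.classColor_eq_of_mem _ _ hv, hP.coloring_apply_of_mem h₂ hv]

lemma pushColoring_coloring {T : Type} (ι : S → T) (hι : Injective ι) :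
    pushColoring G ι hι (hP.coloring j hj) = hP.coloring (ι ∘ j) (hι.comp hj) := rfl

variable {hP} {P' : Set (Set V)} {hP' : IsStablePartition G P'} {j' : P' → S} {hj' : Injective j'}

lemma coloring_congr (h : P = P') (hjj : ∀ b (h₁ : b ∈ P) (h₂ : b ∈ P'), j ⟨b, h₁⟩ = j' ⟨b, h₂⟩) :
    hP.coloring j hj = hP'.coloring j' hj' := by
  subst h
  obtain rfl : j = j' := funext fun b => hjj b.1 b.2 b.2
  rfl

lemma eq_of_coloring_eq (h : hP.coloring j hj = hP'.coloring j' hj') : P = P' := by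
  rw [← hP.colorClasses_coloring (j := j) (hj := hj), h, colorClasses_coloring]

lemma apply_eq_of_coloring_eq (h : hP.coloring j hj = hP'.coloring j' hj') {b : Set V}
    (h₁ : b ∈ P) (h₂ : b ∈ P') : j ⟨b, h₁⟩ = j' ⟨b, h₂⟩ := by
  obtain ⟨v, hv⟩ := Setoid.nonempty_of_mem_partition hP.1 h₁
  rw [← hP.coloring_apply_of_mem (hj := hj) h₁ hv, h, hP'.coloring_apply_of_mem h₂ hv]

end IsStablePartition

lemma RegColoring.coloring_colorClasses {V S : Type} {G : SimpleGraph V} (c : RegColoring G S) :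
    c.isStablePartition_colorClasses.coloring c.classColor c.classColor_injective = c :=
  Subtype.ext (funext fun v => c.classColor_eq_of_mem _ (IsStablePartition.mem_blockOf _ v))

abbrev StablePartitionsOfCard {V : Type} (G : SimpleGraph V) (κ : Cardinal.{0}) : Type :=
  {P : Set (Set V) // IsStablePartition G P ∧ Cardinal.mk P = κ}

noncomputable def StablePartitionsOfCard.outEquiv {V : Type} {G : SimpleGraph V}
    {κ : Cardinal.{0}} (P : StablePartitionsOfCard G κ) : κ.out ≃ P.1 :=
  (Cardinal.eq.mp (by rw [Cardinal.mk_out, P.2.2])).some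

namespace stWreath

open StablePartitionsOfCard

variable {V : Type} {G : SimpleGraph V} {κ : Cardinal.{0}}

/-- How `x` relabels the blocks when it moves a coloring with color classes `P` to one with
color classes `x.right P`. -/
noncomputable def relabel (x : stWreath G κ) (P : StablePartitionsOfCard G κ) :
    (x.right P).1 ≃ P.1 :=
  (outEquiv (x.right P)).symm.trans ((x.left (x.right P))⁻¹.trans (outEquiv P))

lemma relabel_apply (x : stWreath G κ) (P : StablePartitionsOfCard G κ) (b : (x.right P).1) :
    relabel x P b = outEquiv P ((x.left (x.right P))⁻¹ ((outEquiv (x.right P)).symm b)) := rfl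

lemma relabel_one (P : StablePartitionsOfCard G κ) (b : P.1) : relabel 1 P b = b :=
  (outEquiv P).apply_symm_apply b

lemma relabel_mul (x y : stWreath G κ) (P : StablePartitionsOfCard G κ)
    (b : (x.right (y.right P)).1) :
    relabel (x * y) P b = relabel y P (relabel x (y.right P) b) := by
  change outEquiv P ((x.left (x.right (y.right P)) *
      y.left (x.right.symm (x.right (y.right P))))⁻¹ ((outEquiv (x.right (y.right P))).symm b)) =
    outEquiv P ((y.left (y.right P))⁻¹ ((outEquiv (y.right P)).symm (outEquiv (y.right P)
      ((x.left (x.right (y.right P)))⁻¹ ((outEquiv (x.right (y.right P))).symm b)))))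
  simp only [Equiv.symm_apply_apply, mul_inv_rev, Equiv.Perm.mul_apply]

lemma eq_one_of_relabel (x : stWreath G κ) (hright : ∀ P, x.right P = P)
    (hrelabel : ∀ P b, (relabel x P b : Set V) = b) : x = 1 := by
  refine SemidirectProduct.ext (funext fun Q => Equiv.ext fun z => ?_) (Equiv.ext hright)
  have h : (outEquiv Q ((x.left (x.right Q))⁻¹ z) : Set V) = outEquiv (x.right Q) z := by
    simpa only [relabel_apply, Equiv.symm_apply_apply] using hrelabel Q (outEquiv (x.right Q) z)
  generalize hQ : x.right Q = Q' at h
  obtain rfl : Q' = Q := hQ.symm.trans (hright Q)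
  exact (Equiv.Perm.inv_eq_iff_eq.mp ((outEquiv _).injective (Subtype.ext h))).symm

noncomputable def ofRelabel (σ : Equiv.Perm (StablePartitionsOfCard G κ))
    (u : ∀ P, (σ P).1 ≃ P.1) : stWreath G κ :=
  -- a β-redex, so that `relabel_ofRelabel` can rewrite `σ.symm (σ P)` to `P` non-dependently
  ⟨fun Q => (fun P => ((outEquiv (σ P)).trans ((u P).trans (outEquiv P).symm))⁻¹) (σ.symm Q), σ⟩

lemma relabel_ofRelabel (σ : Equiv.Perm (StablePartitionsOfCard G κ)) (u : ∀ P, (σ P).1 ≃ P.1)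
    (P : StablePartitionsOfCard G κ) : relabel (ofRelabel σ u) P = u P := by
  refine Equiv.ext fun b => ?_
  change outEquiv P (((fun P => ((outEquiv (σ P)).trans ((u P).trans (outEquiv P).symm))⁻¹)
    (σ.symm (σ P)))⁻¹ ((outEquiv (σ P)).symm b)) = u P b
  rw [Equiv.symm_apply_apply, inv_inv]
  exact ((outEquiv P).apply_symm_apply _).trans
    (congrArg (u P) ((outEquiv (σ P)).apply_symm_apply b))

end stWreath

def IsNaturalFamily {V : Type} (G : SimpleGraph V)
    (t : ∀ S : Type, RegColoring G S → RegColoring G S) : Prop :=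
  ∀ (S T : Type) (ι : S → T) (hι : Injective ι) (c : RegColoring G S),
    t T (pushColoring G ι hι c) = pushColoring G ι hι (t S c)

section WreathAction

variable {V : Type} {G : SimpleGraph V}

noncomputable def relabelColoring {κ : Cardinal.{0}} (x : stWreath G κ)
    (P : StablePartitionsOfCard G κ) {S : Type} (j : P.1 → S) (hj : Injective j) :
    RegColoring G S :=
  (x.right P).2.1.coloring (j ∘ x.relabel P) (hj.comp (Equiv.injective _))

lemma relabelColoring_congr (w : ∀ κ : Cardinal.{0}, stWreath G κ) {S : Type}
    {P P' : Set (Set V)} {hP : IsStablePartition G P} {hP' : IsStablePartition G P'}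
    {κ κ' : Cardinal.{0}} {hκ : Cardinal.mk P = κ} {hκ' : Cardinal.mk P' = κ'}
    {j : P → S} {j' : P' → S} {hj : Injective j} {hj' : Injective j'} (h : P = P')
    (hjj : ∀ b (h₁ : b ∈ P) (h₂ : b ∈ P'), j ⟨b, h₁⟩ = j' ⟨b, h₂⟩) :
    relabelColoring (w κ) ⟨P, hP, hκ⟩ j hj = relabelColoring (w κ') ⟨P', hP', hκ'⟩ j' hj' := by
  subst h hκ hκ'
  obtain rfl : j = j' := funext fun b => hjj b.1 b.2 b.2
  rfl

lemma relabelColoring_mul {κ : Cardinal.{0}} (x y : stWreath G κ)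
    (P : StablePartitionsOfCard G κ) {S : Type} (j : P.1 → S) (hj : Injective j) :
    relabelColoring (x * y) P j hj =
      relabelColoring x (y.right P) (j ∘ y.relabel P) (hj.comp (Equiv.injective _)) :=
  IsStablePartition.coloring_congr rfl fun b h₁ _ =>
    congrArg j (stWreath.relabel_mul x y P ⟨b, h₁⟩)

noncomputable def wreathColoring (w : ∀ κ : Cardinal.{0}, stWreath G κ) (S : Type)
    (c : RegColoring G S) : RegColoring G S :=
  relabelColoring (w _) ⟨c.colorClasses, c.isStablePartition_colorClasses, rfl⟩ c.classColor
    c.classColor_injective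

lemma wreathColoring_coloring (w : ∀ κ : Cardinal.{0}, stWreath G κ) {P : Set (Set V)}
    (hP : IsStablePartition G P) {κ : Cardinal.{0}} (hκ : Cardinal.mk P = κ) {S : Type}
    (j : P → S) (hj : Injective j) :
    wreathColoring w S (hP.coloring j hj) = relabelColoring (w κ) ⟨P, hP, hκ⟩ j hj :=
  relabelColoring_congr w (hP := RegColoring.isStablePartition_colorClasses _) (hP' := hP)
    (hκ := rfl) (hκ' := hκ) hP.colorClasses_coloring
    (fun _ _ _ => hP.classColor_coloring _ _)

lemma wreathColoring_one (S : Type) (c : RegColoring G S) : wreathColoring 1 S c = c := by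
  refine Eq.trans ?_ c.coloring_colorClasses
  unfold wreathColoring relabelColoring
  exact IsStablePartition.coloring_congr rfl fun b h₁ _ =>
    congrArg c.classColor (stWreath.relabel_one _ ⟨b, h₁⟩)

lemma wreathColoring_mul (x y : ∀ κ : Cardinal.{0}, stWreath G κ) (S : Type)
    (c : RegColoring G S) :
    wreathColoring (x * y) S c = wreathColoring x S (wreathColoring y S c) := by
  set P : StablePartitionsOfCard G (Cardinal.mk c.colorClasses) :=
    ⟨c.colorClasses, c.isStablePartition_colorClasses, rfl⟩
  change _ = wreathColoring x S (((y _).right P).2.1.coloring (c.classColor ∘ (y _).relabel P)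
    (c.classColor_injective.comp (Equiv.injective _)))
  rw [wreathColoring_coloring x _ ((y _).right P).2.2]
  exact relabelColoring_mul (x _) (y _) P c.classColor c.classColor_injective

lemma isNaturalFamily_wreathColoring (w : ∀ κ : Cardinal.{0}, stWreath G κ) :
    IsNaturalFamily G (wreathColoring w) := by
  intro S T ι hι c
  conv_lhs => rw [← c.coloring_colorClasses, IsStablePartition.pushColoring_coloring]
  rw [wreathColoring_coloring w _ rfl]
  rfl

lemma eq_one_of_wreathColoring_eq_self (w : ∀ κ : Cardinal.{0}, stWreath G κ)
    (h : ∀ S c, wreathColoring w S c = c) : w = 1 := by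
  funext κ
  have key (P : StablePartitionsOfCard G κ) :
      relabelColoring (w κ) P id injective_id = P.2.1.coloring id injective_id := by
    rw [← wreathColoring_coloring w P.2.1 P.2.2, h]
  have hright (P : StablePartitionsOfCard G κ) : ((w κ).right P).1 = P.1 :=
    IsStablePartition.eq_of_coloring_eq (key P)
  refine stWreath.eq_one_of_relabel (w κ) (fun P => Subtype.ext (hright P)) fun P b => ?_
  exact congrArg Subtype.val
    (IsStablePartition.apply_eq_of_coloring_eq (key P) b.2 (hright P ▸ b.2))

lemma wreathColoring_injective :
    Injective (wreathColoring : (∀ κ : Cardinal.{0}, stWreath G κ) → _) := by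
  intro x y h
  refine inv_mul_eq_one.mp (eq_one_of_wreathColoring_eq_self _ fun S c => ?_)
  rw [wreathColoring_mul, ← h, ← wreathColoring_mul, inv_mul_cancel, wreathColoring_one]

noncomputable def toChromNatAut (w : ∀ κ : Cardinal.{0}, stWreath G κ) : ChromNatAut G :=
  ⟨wreathColoring w, fun S => bijective_iff_has_inverse.mpr ⟨wreathColoring w⁻¹ S,
    fun c => by rw [← wreathColoring_mul, inv_mul_cancel, wreathColoring_one],
    fun c => by rw [← wreathColoring_mul, mul_inv_cancel, wreathColoring_one]⟩,
    isNaturalFamily_wreathColoring w⟩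

lemma chromComp_toChromNatAut (x y : ∀ κ : Cardinal.{0}, stWreath G κ) :
    chromComp (toChromNatAut x) (toChromNatAut y) = toChromNatAut (x * y) :=
  Subtype.ext (funext fun S => funext fun c => (wreathColoring_mul x y S c).symm)

lemma toChromNatAut_injective : Injective (toChromNatAut (G := G)) :=
  fun _ _ h => wreathColoring_injective (congrArg Subtype.val h)

end WreathAction

section NaturalFamily

variable {V : Type} {G : SimpleGraph V} (t : ∀ S : Type, RegColoring G S → RegColoring G S)
  {P : Set (Set V)} (hP : IsStablePartition G P)

noncomputable def imagePartition : Set (Set V) :=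
  (t P (hP.coloring id injective_id)).colorClasses

lemma isStablePartition_imagePartition : IsStablePartition G (imagePartition t hP) :=
  RegColoring.isStablePartition_colorClasses _

noncomputable def imageLabel : imagePartition t hP → P :=
  (t P (hP.coloring id injective_id)).classColor

lemma imageLabel_injective : Injective (imageLabel t hP) :=
  RegColoring.classColor_injective _

variable {t}

lemma IsNaturalFamily.apply_coloring (ht : IsNaturalFamily G t) {S : Type} (j : P → S)
    (hj : Injective j) :
    t S (hP.coloring j hj) = (isStablePartition_imagePartition t hP).coloring
      (j ∘ imageLabel t hP) (hj.comp (imageLabel_injective t hP)) := by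
  -- `hP.coloring j hj` is the push-forward of the tautological coloring along `j`.
  change t S (pushColoring G j hj (hP.coloring id injective_id)) = _
  rw [ht, ← (t P (hP.coloring id injective_id)).coloring_colorClasses]
  rfl

variable {t' : ∀ S : Type, RegColoring G S → RegColoring G S}

lemma IsNaturalFamily.apply_apply_coloring (ht : IsNaturalFamily G t) (ht' : IsNaturalFamily G t') :
    t P (t' P (hP.coloring id injective_id)) =
      (isStablePartition_imagePartition t (isStablePartition_imagePartition t' hP)).coloring
        (imageLabel t' hP ∘ imageLabel t _)
        ((imageLabel_injective t' hP).comp (imageLabel_injective t _)) := by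
  rw [ht'.apply_coloring, ht.apply_coloring]
  rfl

lemma imagePartition_imagePartition_of_leftInverse (ht : IsNaturalFamily G t)
    (ht' : IsNaturalFamily G t') (hinv : ∀ S (c : RegColoring G S), t S (t' S c) = c) :
    imagePartition t (isStablePartition_imagePartition t' hP) = P :=
  IsStablePartition.eq_of_coloring_eq ((ht.apply_apply_coloring hP ht').symm.trans (hinv _ _))

lemma imageLabel_surjective_of_leftInverse (ht : IsNaturalFamily G t)
    (ht' : IsNaturalFamily G t') (hinv : ∀ S (c : RegColoring G S), t S (t' S c) = c) :
    Surjective (imageLabel t' hP) := by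
  intro b
  have hb : b.1 ∈ imagePartition t (isStablePartition_imagePartition t' hP) := by
    rw [imagePartition_imagePartition_of_leftInverse hP ht ht' hinv]
    exact b.2
  exact ⟨_, IsStablePartition.apply_eq_of_coloring_eq
    ((ht.apply_apply_coloring hP ht').symm.trans (hinv _ _)) hb b.2⟩

end NaturalFamily

namespace ChromNatAut

variable {V : Type} {G : SimpleGraph V} (f : ChromNatAut G)

lemma isNaturalFamily : IsNaturalFamily G f.1 := f.2.2

noncomputable def symm : ChromNatAut G :=
  ⟨fun S => (Equiv.ofBijective _ (f.2.1 S)).symm, fun S => Equiv.bijective _,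
    fun S T ι hι c => (f.2.1 T).1 (by simp only [Equiv.ofBijective_apply_symm_apply, f.2.2])⟩

lemma apply_symm (S : Type) (c : RegColoring G S) : f.1 S (f.symm.1 S c) = c :=
  Equiv.ofBijective_apply_symm_apply _ _ c

lemma symm_apply (S : Type) (c : RegColoring G S) : f.symm.1 S (f.1 S c) = c :=
  Equiv.ofBijective_symm_apply_apply _ _ c

noncomputable def imageLabelEquiv {P : Set (Set V)} (hP : IsStablePartition G P) :
    imagePartition f.1 hP ≃ P :=
  Equiv.ofBijective _ ⟨imageLabel_injective f.1 hP, imageLabel_surjective_of_leftInverse hP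
    f.symm.isNaturalFamily f.isNaturalFamily f.symm_apply⟩

noncomputable def imagePerm (κ : Cardinal.{0}) : Equiv.Perm (StablePartitionsOfCard G κ) where
  toFun P := ⟨imagePartition f.1 P.2.1, isStablePartition_imagePartition f.1 P.2.1,
    (Cardinal.mk_congr (f.imageLabelEquiv P.2.1)).trans P.2.2⟩
  invFun P := ⟨imagePartition f.symm.1 P.2.1, isStablePartition_imagePartition f.symm.1 P.2.1,
    (Cardinal.mk_congr (f.symm.imageLabelEquiv P.2.1)).trans P.2.2⟩
  left_inv P := Subtype.ext (imagePartition_imagePartition_of_leftInverse P.2.1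
    f.symm.isNaturalFamily f.isNaturalFamily f.symm_apply)
  right_inv P := Subtype.ext (imagePartition_imagePartition_of_leftInverse P.2.1
    f.isNaturalFamily f.symm.isNaturalFamily f.apply_symm)

noncomputable def toWreath : ∀ κ : Cardinal.{0}, stWreath G κ :=
  fun κ => stWreath.ofRelabel (f.imagePerm κ) fun P => f.imageLabelEquiv P.2.1

lemma wreathColoring_toWreath (S : Type) (c : RegColoring G S) :
    wreathColoring f.toWreath S c = f.1 S c := by
  conv_rhs => rw [← c.coloring_colorClasses, f.isNaturalFamily.apply_coloring]
  unfold wreathColoring relabelColoring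
  exact IsStablePartition.coloring_congr rfl fun b h₁ _ => congrArg c.classColor
    (DFunLike.congr_fun (stWreath.relabel_ofRelabel _ _ _) ⟨b, h₁⟩)

end ChromNatAut

lemma toChromNatAut_surjective {V : Type} {G : SimpleGraph V} :
    Surjective (toChromNatAut (G := G)) := fun f =>
  ⟨f.toWreath, Subtype.ext (funext fun S => funext (f.wreathColoring_toWreath S))⟩

/-- The group `Aut(χ(G,•))` of natural automorphisms of the chromatic functor of a
(possibly infinite) simple graph `G` is isomorphic to the direct product, over all cardinal
numbers `κ`, of the wreath products `𝔖_κ ≀ 𝔖_{n_κ}` with `n_κ = #St_κ(G)`. -/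
theorem stmt8 {V : Type} (G : SimpleGraph V) :
    ∃ e : ChromNatAut G ≃ (∀ κ : Cardinal.{0}, stWreath G κ),
      ∀ a b : ChromNatAut G, e (chromComp a b) = e a * e b := by
  let e := Equiv.ofBijective _ ⟨toChromNatAut_injective (G := G), toChromNatAut_surjective⟩
  refine ⟨e.symm, fun a b => e.injective ?_⟩
  calc e (e.symm (chromComp a b)) = chromComp (e (e.symm a)) (e (e.symm b)) := by
        simp only [Equiv.apply_symm_apply]
    _ = e (e.symm a * e.symm b) := chromComp_toChromNatAut _ _
end

section
/- Let G = (V,E) be a (possibly infinite) simple graph. The map Φ_G : Aut(G) → Aut(χ(G,•)), which sends a graph automorphism φ to the natural automorphism φ̄ whose component at a set S sends a regular S-coloring c to c ∘ φ⁻¹, is an injective group homomorphism. -/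
namespace RegColoring

variable {V W S : Type} {G : SimpleGraph V} {H : SimpleGraph W}

def comap (f : G →g H) (c : RegColoring H S) : RegColoring G S :=
  ⟨c.1 ∘ f, fun _ _ h => c.2 _ _ (f.map_adj h)⟩

def comapEquiv (e : G ≃g H) : RegColoring H S ≃ RegColoring G S where
  toFun := comap e.toHom
  invFun := comap e.symm.toHom
  left_inv c := Subtype.ext <| funext fun w => congrArg c.1 (e.apply_symm_apply w)
  right_inv c := Subtype.ext <| funext fun v => congrArg c.1 (e.symm_apply_apply v)

theorem comap_pushColoring (f : G →g H) {T : Type} (ι : S → T) (hι : Function.Injective ι)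
    (c : RegColoring H S) :
    comap f (pushColoring H ι hι c) = pushColoring G ι hι (comap f c) :=
  rfl

variable (G) in
def tautological : RegColoring G V :=
  ⟨id, fun _ _ h => h.ne⟩

end RegColoring

variable {V : Type} {G : SimpleGraph V}

def chromAutOfIso (φ : G ≃g G) : ChromNatAut G :=
  ⟨fun _ => RegColoring.comap φ.symm.toHom,
    fun _ => (RegColoring.comapEquiv φ.symm).bijective,
    fun _ _ ι hι c => RegColoring.comap_pushColoring φ.symm.toHom ι hι c⟩

theorem chromAutOfIso_mul (φ ψ : G ≃g G) :
    chromAutOfIso (φ * ψ) = chromComp (chromAutOfIso φ) (chromAutOfIso ψ) :=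
  rfl

-- At the coloring of `G` by its own vertices, `chromAutOfIso φ` returns `φ⁻¹` itself.
theorem chromAutOfIso_injective : Function.Injective (chromAutOfIso (G := G)) := by
  intro φ ψ h
  have hsymm : ⇑φ.symm = ⇑ψ.symm :=
    congrArg (fun f : ChromNatAut G => (f.1 V (RegColoring.tautological G)).1) h
  simpa using congrArg RelIso.symm (DFunLike.coe_injective hsymm : φ.symm = ψ.symm)

/-- The map `Φ_G : Aut(G) → Aut(χ(G,•))` sending a graph automorphism `φ` to the natural
automorphism whose component at a set `S` sends a regular `S`-coloring `c` to `c ∘ φ⁻¹`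
is an injective group homomorphism. -/
theorem stmt9 {V : Type} (G : SimpleGraph V) :
    ∃ Φ : (G ≃g G) → ChromNatAut G,
      (∀ (φ : G ≃g G) (S : Type) (c : RegColoring G S),
        ((Φ φ).1 S c).1 = c.1 ∘ ⇑φ.symm) ∧
      (∀ φ ψ : G ≃g G, Φ (φ * ψ) = chromComp (Φ φ) (Φ ψ)) ∧
      Function.Injective Φ :=
  ⟨chromAutOfIso, fun _ _ _ => rfl, chromAutOfIso_mul, chromAutOfIso_injective⟩
end

section
/- Let G = (V,E) be a (possibly infinite) simple graph. The injective group homomorphism Φ_G : Aut(G) → Aut(χ(G,•)), φ ↦ (c ↦ c∘φ⁻¹), is a group isomorphism if and only if G is a complete graph or G is the graph with exactly 2 vertices and no edges. -/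
/-!
Every natural automorphism `F` is determined on injective colorings by the single coloring
`e = F_V(id)`: naturality along the injection `c` gives `F(c) = c ∘ e`. For a complete graph all
colorings are injective; on two vertices every coloring is injective or constant, and constant
colorings are fixed since they factor through a one-point set. In both cases `e` is a bijection,
hence an automorphism, and `F` is induced by it.

Otherwise there are distinct non-adjacent `v, u` and a third vertex `w`. Exchanging the colours
of `v` and `w`, but only on colorings that identify `v` with `u` and are injective elsewhere, is
natural (this property is stable under injections) and fixes the identity coloring. An induced
automorphism fixing the identity coloring fixes everything, whereas this one moves the coloring
that merges `u` into `v`.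
-/

open Function

variable {V : Type}

section graph

variable {G : SimpleGraph V}

theorem exists_nonadj_triple (hnc : ¬ ∀ v u : V, v ≠ u → G.Adj v u)
    (h2 : ¬ (Nat.card V = 2 ∧ ∀ v u : V, ¬ G.Adj v u)) :
    ∃ v u w : V, ¬ G.Adj v u ∧ v ≠ u ∧ w ≠ v ∧ w ≠ u := by
  push Not at hnc
  obtain ⟨v, u, hvu, hadj⟩ := hnc
  suffices ∃ w, w ≠ v ∧ w ≠ u from let ⟨w, hw⟩ := this; ⟨v, u, w, hadj, hvu, hw⟩
  by_contra! hw
  have hall : ∀ x, x = v ∨ x = u := fun x => or_iff_not_imp_left.2 (hw x)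
  refine h2 ⟨Nat.card_eq_two_iff.2 ⟨v, u, hvu, Set.eq_univ_of_forall fun x => ?_⟩,
    fun x y hxy => ?_⟩
  · simpa using hall x
  · rcases hall x with rfl | rfl <;> rcases hall y with rfl | rfl <;>
      grind [SimpleGraph.Adj.symm, SimpleGraph.irrefl]

theorem injective_or_forall_eq_of_card_eq_two {S : Type} (h : Nat.card V = 2) (f : V → S) :
    Injective f ∨ ∀ x y, f x = f y := by
  obtain ⟨a, b, hab, huniv⟩ := Nat.card_eq_two_iff.1 h
  have hall : ∀ x, x = a ∨ x = b := fun x => by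
    simpa using (huniv.symm ▸ Set.mem_univ x : x ∈ ({a, b} : Set V))
  by_cases hf : f a = f b
  · exact Or.inr fun x y => by
      rcases hall x with rfl | rfl <;> rcases hall y with rfl | rfl <;> simp [hf]
  · exact Or.inl fun x y hxy => by
      rcases hall x with rfl | rfl <;> rcases hall y with rfl | rfl <;> grind

theorem injective_of_forall_adj (hG : ∀ v u : V, v ≠ u → G.Adj v u) {S : Type}
    (c : RegColoring G S) : Injective c.1 :=
  fun x y hxy => by_contra fun hne => c.2 x y (hG x y hne) hxy

theorem adj_iff_of_complete_or_edgeless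
    (hG : (∀ v u : V, v ≠ u → G.Adj v u) ∨ ∀ v u : V, ¬ G.Adj v u) (e : V ≃ V) (a b : V) :
    G.Adj (e a) (e b) ↔ G.Adj a b := by
  rcases hG with hcomp | hempty
  · have hadj : ∀ x y, G.Adj x y ↔ x ≠ y := fun x y => ⟨G.ne_of_adj, hcomp x y⟩
    simp [hadj]
  · simp [hempty]

end graph

def idColoring (G : SimpleGraph V) : RegColoring G V :=
  ⟨id, fun _ _ h => G.ne_of_adj h⟩

namespace ChromNatAut

variable {G : SimpleGraph V} (F : ChromNatAut G)

theorem apply_eq_comp_of_injective {S : Type} (c : RegColoring G S) (hc : Injective c.1) :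
    (F.1 S c).1 = c.1 ∘ (F.1 V (idColoring G)).1 :=
  congrArg Subtype.val (F.2.2 V S c.1 hc (idColoring G))

theorem apply_eq_self_of_forall_eq {S : Type} (c : RegColoring G S)
    (hc : ∀ x y, c.1 x = c.1 y) : F.1 S c = c := by
  cases isEmpty_or_nonempty V with
  | inl _ => exact Subsingleton.elim _ _
  | inr h =>
    obtain ⟨a⟩ := h
    let cUnit : RegColoring G Unit := ⟨fun _ => (), fun x y h _ => c.2 x y h (hc x y)⟩
    have hι : Injective (fun _ : Unit => c.1 a) := fun _ _ _ => rfl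
    have hpush : pushColoring G _ hι cUnit = c := Subtype.ext (funext fun x => hc a x)
    have hnat := F.2.2 Unit S _ hι cUnit
    rwa [Subsingleton.elim (F.1 Unit cUnit) cUnit, hpush] at hnat

theorem apply_eq_comp_of_injective_or_const
    (hG : ∀ (S : Type) (c : RegColoring G S), Injective c.1 ∨ ∀ x y, c.1 x = c.1 y)
    (S : Type) (c : RegColoring G S) : (F.1 S c).1 = c.1 ∘ (F.1 V (idColoring G)).1 := by
  rcases hG S c with hc | hc
  · exact F.apply_eq_comp_of_injective c hc
  · rw [F.apply_eq_self_of_forall_eq c hc]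
    exact funext fun x => hc x _

theorem bijective_of_forall_apply_eq_comp {e : V → V}
    (he : ∀ (S : Type) (c : RegColoring G S), (F.1 S c).1 = c.1 ∘ e) : Bijective e := by
  obtain ⟨d, hd⟩ := (F.2.1 V).2 (idColoring G)
  have hde : LeftInverse d.1 e := fun x => by
    simpa [he, idColoring] using congrFun (congrArg Subtype.val hd) x
  let ed : RegColoring G V := ⟨e ∘ d.1, fun x y h hxy => d.2 x y h (hde.injective hxy)⟩
  have hed : ed = idColoring G := (F.2.1 V).1 <| Subtype.ext <| by
    rw [he, he]
    exact funext fun x => congrArg e (hde x)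
  exact ⟨hde.injective, fun x => ⟨d.1 x, congrFun (congrArg Subtype.val hed) x⟩⟩

end ChromNatAut

def IdentifiesOnly {S : Type} (v u : V) (f : V → S) : Prop :=
  f v = f u ∧ ∀ x y, x ≠ u → y ≠ u → f x = f y → x = y

theorem identifiesOnly_comp_iff {S T : Type} {ι : S → T} (hι : Injective ι) {v u : V}
    {f : V → S} : IdentifiesOnly v u (ι ∘ f) ↔ IdentifiesOnly v u f := by
  simp only [IdentifiesOnly, comp_apply, hι.eq_iff]

section mergeSwap

open Classical

noncomputable def mergeSwap (v u w : V) {S : Type} (f : V → S) : V → S :=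
  if IdentifiesOnly v u f then Equiv.swap (f v) (f w) ∘ f else f

variable {S : Type} (v u w : V) {f : V → S}

theorem mergeSwap_of_identifiesOnly (hf : IdentifiesOnly v u f) :
    mergeSwap v u w f = Equiv.swap (f v) (f w) ∘ f :=
  if_pos hf

theorem mergeSwap_of_not_identifiesOnly (hf : ¬ IdentifiesOnly v u f) :
    mergeSwap v u w f = f :=
  if_neg hf

theorem mergeSwap_apply_eq_iff {x y : V} :
    mergeSwap v u w f x = mergeSwap v u w f y ↔ f x = f y := by
  unfold mergeSwap
  split_ifs <;> simp

theorem mergeSwap_involutive : Involutive (mergeSwap v u w : (V → S) → V → S) := by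
  intro f
  by_cases hf : IdentifiesOnly v u f
  · have hf' : IdentifiesOnly v u (Equiv.swap (f v) (f w) ∘ f) :=
      (identifiesOnly_comp_iff (Equiv.injective _)).2 hf
    rw [mergeSwap_of_identifiesOnly v u w hf, mergeSwap_of_identifiesOnly v u w hf']
    funext x
    simp [Equiv.swap_comm (f w) (f v)]
  · rw [mergeSwap_of_not_identifiesOnly v u w hf, mergeSwap_of_not_identifiesOnly v u w hf]

theorem mergeSwap_comp {T : Type} {ι : S → T} (hι : Injective ι) (f : V → S) :
    mergeSwap v u w (ι ∘ f) = ι ∘ mergeSwap v u w f := by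
  by_cases hf : IdentifiesOnly v u f
  · rw [mergeSwap_of_identifiesOnly v u w ((identifiesOnly_comp_iff hι).2 hf),
      mergeSwap_of_identifiesOnly v u w hf, comp_apply, comp_apply, ← comp_assoc,
      hι.swap_comp, comp_assoc]
  · rw [mergeSwap_of_not_identifiesOnly v u w (mt (identifiesOnly_comp_iff hι).1 hf),
      mergeSwap_of_not_identifiesOnly v u w hf]

noncomputable def mergeSwapAut (G : SimpleGraph V) (v u w : V) : ChromNatAut G :=
  ⟨fun _ c => ⟨mergeSwap v u w c.1, fun x y h hxy =>
      c.2 x y h ((mergeSwap_apply_eq_iff v u w).1 hxy)⟩,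
    fun _ => Involutive.bijective fun c => Subtype.ext (mergeSwap_involutive v u w c.1),
    fun _ _ _ hι c => Subtype.ext (mergeSwap_comp v u w hι c.1)⟩

noncomputable def mergeColoring (G : SimpleGraph V) {v u : V} (hadj : ¬ G.Adj v u) :
    RegColoring G V :=
  ⟨update id u v, fun x y hxy => by
    have := G.ne_of_adj hxy
    simp only [update_apply, id]
    split_ifs <;> grind [SimpleGraph.Adj.symm]⟩

variable {G : SimpleGraph V} {v u w : V}

theorem identifiesOnly_mergeColoring (hadj : ¬ G.Adj v u) (hvu : v ≠ u) :
    IdentifiesOnly v u (mergeColoring G hadj).1 := by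
  refine ⟨by simp [mergeColoring, hvu], fun x y hx hy hxy => ?_⟩
  simpa [mergeColoring, hx, hy] using hxy

theorem mergeSwapAut_idColoring (hvu : v ≠ u) :
    (mergeSwapAut G v u w).1 V (idColoring G) = idColoring G :=
  Subtype.ext (mergeSwap_of_not_identifiesOnly v u w fun h => hvu h.1)

theorem mergeSwapAut_mergeColoring_ne (hadj : ¬ G.Adj v u) (hvu : v ≠ u) (hwv : w ≠ v)
    (hwu : w ≠ u) : (mergeSwapAut G v u w).1 V (mergeColoring G hadj) ≠ mergeColoring G hadj := by
  intro h
  have hw := congrFun (congrArg Subtype.val h) w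
  simp only [mergeSwapAut, mergeSwap_of_identifiesOnly v u w
    (identifiesOnly_mergeColoring hadj hvu), comp_apply, Equiv.swap_apply_right] at hw
  exact hwv (by simpa [mergeColoring, update_of_ne hvu, hwu] using hw.symm)

end mergeSwap

section induced

variable {G : SimpleGraph V} {Φ : (G ≃g G) → ChromNatAut G}
  (hΦ : ∀ (φ : G ≃g G) (S : Type) (c : RegColoring G S), ((Φ φ).1 S c).1 = c.1 ∘ ⇑φ.symm)
include hΦ

theorem injective_of_apply_eq_comp_symm : Injective Φ := by
  intro φ ψ h
  have hcomp := hΦ φ V (idColoring G)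
  rw [h, hΦ ψ] at hcomp
  have hsymm : φ.symm = ψ.symm := by
    ext x
    exact (congrFun hcomp x).symm
  exact congrArg RelIso.symm hsymm

theorem apply_eq_self_of_apply_idColoring {φ : G ≃g G}
    (hφ : (Φ φ).1 V (idColoring G) = idColoring G) (S : Type) (c : RegColoring G S) :
    (Φ φ).1 S c = c := by
  have hsymm : ⇑φ.symm = id := by
    have hcomp := hΦ φ V (idColoring G)
    rw [hφ] at hcomp
    exact hcomp.symm
  exact Subtype.ext (by rw [hΦ, hsymm, comp_id])

theorem not_surjective_of_nonadj {v u w : V} (hadj : ¬ G.Adj v u) (hvu : v ≠ u) (hwv : w ≠ v)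
    (hwu : w ≠ u) : ¬ Surjective Φ := by
  intro hsurj
  obtain ⟨φ, hφ⟩ := hsurj (mergeSwapAut G v u w)
  have hfix := apply_eq_self_of_apply_idColoring hΦ (hφ ▸ mergeSwapAut_idColoring hvu)
  exact mergeSwapAut_mergeColoring_ne hadj hvu hwv hwu (hφ ▸ hfix V (mergeColoring G hadj))

theorem apply_symm_eq_of_forall_apply_eq_comp (F : ChromNatAut G) (ψ : G ≃g G)
    (hF : ∀ (S : Type) (c : RegColoring G S), (F.1 S c).1 = c.1 ∘ ψ) : Φ ψ.symm = F :=
  Subtype.ext <| funext fun S => funext fun c => Subtype.ext <| by rw [hΦ, hF]; rfl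

end induced

/-- For a (possibly infinite) simple graph `G`, the injective group homomorphism
`Φ_G : Aut(G) → Aut(χ(G,•))`, `φ ↦ (c ↦ c ∘ φ⁻¹)`, is a group isomorphism (i.e. is
bijective) if and only if `G` is a complete graph or `G` is the graph with exactly `2`
vertices and no edges. -/
theorem stmt10 {V : Type} (G : SimpleGraph V) (Φ : (G ≃g G) → ChromNatAut G)
    (hΦ : ∀ (φ : G ≃g G) (S : Type) (c : RegColoring G S),
      ((Φ φ).1 S c).1 = c.1 ∘ ⇑φ.symm) :
    Function.Bijective Φ ↔
      ((∀ v u : V, v ≠ u → G.Adj v u) ∨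
        (Nat.card V = 2 ∧ ∀ v u : V, ¬ G.Adj v u)) := by
  refine ⟨fun hbij => ?_, fun hG => ⟨injective_of_apply_eq_comp_symm hΦ, fun F => ?_⟩⟩
  · by_contra hG
    obtain ⟨v, u, w, hadj, hvu, hwv, hwu⟩ :=
      exists_nonadj_triple (not_or.1 hG).1 (not_or.1 hG).2
    exact not_surjective_of_nonadj hΦ hadj hvu hwv hwu hbij.2
  · have hcol : ∀ (S : Type) (c : RegColoring G S), Injective c.1 ∨ ∀ x y, c.1 x = c.1 y := by
      rcases hG with hcomp | ⟨hcard, -⟩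
      · exact fun S c => Or.inl (injective_of_forall_adj hcomp c)
      · exact fun S c => injective_or_forall_eq_of_card_eq_two hcard c.1
    have hF := F.apply_eq_comp_of_injective_or_const hcol
    let ψ : G ≃g G := ⟨Equiv.ofBijective _ (F.bijective_of_forall_apply_eq_comp hF),
      adj_iff_of_complete_or_edgeless (hG.imp_right And.right) _ _ _⟩
    exact ⟨ψ.symm, apply_symm_eq_of_forall_apply_eq_comp hΦ F ψ hF⟩
end

section
/- Fix a positive integer k and a partition λ = (λ₁,…,λ_l) of an integer m with m ≤ k. For all integers n, n' with n, n' ≥ max(2k, m+λ₁), the Kostka numbers satisfy K_{λ[n],α(n,k)} = K_{λ[n'],α(n',k)}; that is, the number of semistandard Young tableaux of shape λ[n] = (n−m,λ₁,…,λ_l) and type α(n,k) = (n−k,1,1,…,1) (with k ones) is independent of n in this range. -/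
/-- The number of cells of `T` containing the entry `i`. -/
def entryCount (μ : YoungDiagram) (T : SemistandardYoungTableau μ) (i : ℕ) : ℕ :=
  (μ.cells.filter fun c => T c.1 c.2 = i).card

/-- The Kostka number `K_{μ,α}`: the number of semistandard Young tableaux of shape `μ`
and type `α` (entry `i` appears `α i` times; entries are indexed from `0`). -/
noncomputable def kostka (μ : YoungDiagram) (α : ℕ → ℕ) : ℕ :=
  Nat.card {T : SemistandardYoungTableau μ // ∀ i : ℕ, entryCount μ T i = α i}

/-- The type `α(n,k) = (n−k,1,1,…,1)` with `k` ones. -/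
def typeNK (n k : ℕ) : ℕ → ℕ :=
  fun i => if i = 0 then n - k else if i ≤ k then 1 else 0

/-!
In a tableau of type `α(n,k) = (n−k,1,…,1)` the `n−k` zeros fill exactly the first `n−k` cells
of the first row, since an entry in row `i` is at least `i` and rows are weakly increasing.
The rows below the first have length at most `m ≤ k ≤ n−k`, so they sit entirely under these
zeros, and column strictness never involves the remaining `k−m` cells of the first row.
Replacing the `n−k` leading zeros by `n'−k` zeros is therefore a bijection between the
tableaux counted by the two Kostka numbers.
-/

namespace SemistandardYoungTableau

variable {μ : YoungDiagram} (T : SemistandardYoungTableau μ)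

theorem le_entry {i j : ℕ} (hij : (i, j) ∈ μ) : i ≤ T i j := by
  induction i with
  | zero => exact Nat.zero_le _
  | succ i ih =>
    have hup : (i, j) ∈ μ := μ.up_left_mem (Nat.le_succ i) le_rfl hij
    have := T.col_strict (Nat.lt_add_one i) hij
    have := ih hup
    omega

theorem mem_and_entry_eq_zero_iff (j : ℕ) :
    (0, j) ∈ μ ∧ T 0 j = 0 ↔ j < entryCount μ T 0 := by
  constructor
  · rintro ⟨hj, hzero⟩
    have hsub : {0} ×ˢ Finset.range (j + 1) ⊆ μ.cells.filter fun c => T c.1 c.2 = 0 := by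
      simp only [Finset.subset_iff, Finset.mem_product, Finset.mem_singleton, Finset.mem_range,
        Finset.mem_filter, YoungDiagram.mem_cells, and_imp, Prod.forall]
      rintro _ j' rfl hj'
      have := T.row_weak_of_le (show j' ≤ j by omega) hj
      exact ⟨μ.up_left_mem le_rfl (by omega) hj, by omega⟩
    simpa [entryCount] using Finset.card_le_card hsub
  · intro hlt
    by_contra hnot
    have hsub : (μ.cells.filter fun c => T c.1 c.2 = 0) ⊆ {0} ×ˢ Finset.range j := by
      simp only [Finset.subset_iff, Finset.mem_product, Finset.mem_singleton, Finset.mem_range,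
        Finset.mem_filter, YoungDiagram.mem_cells, and_imp, Prod.forall]
      intro i j' hij' hzero
      have hi : i = 0 := by have := T.le_entry hij'; omega
      subst hi
      refine ⟨rfl, lt_of_not_ge fun hjj' => hnot ⟨μ.up_left_mem le_rfl hjj' hij', ?_⟩⟩
      have := T.row_weak_of_le hjj' hij'
      omega
    have := Finset.card_le_card hsub
    simp only [Finset.card_product, Finset.card_singleton, Finset.card_range, one_mul] at this
    exact hlt.not_ge this

end SemistandardYoungTableau

namespace YoungDiagram

variable {a a' : ℕ} {L : List ℕ}

theorem mem_ofRowLens_cons_zero {h : (a :: L).SortedGE} {j : ℕ} :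
    (0, j) ∈ ofRowLens (a :: L) h ↔ j < a := by
  simp [mem_ofRowLens]

theorem mem_ofRowLens_cons_succ_iff {h : (a :: L).SortedGE} {h' : (a' :: L).SortedGE}
    {i j : ℕ} : (i + 1, j) ∈ ofRowLens (a :: L) h ↔ (i + 1, j) ∈ ofRowLens (a' :: L) h' := by
  simp [mem_ofRowLens]

theorem lt_of_mem_ofRowLens_cons_succ {h : (a :: L).SortedGE} {i j z : ℕ}
    (hL : ∀ x ∈ L, x ≤ z) (hij : (i + 1, j) ∈ ofRowLens (a :: L) h) : j < z := by
  obtain ⟨hi, hj⟩ := mem_ofRowLens.mp hij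
  simp only [List.length_cons, List.getElem_cons_succ] at hi hj
  exact lt_of_lt_of_le hj (hL _ (List.getElem_mem _))

end YoungDiagram

section ReplaceZeros

open YoungDiagram

variable {a a' : ℕ} {L : List ℕ} {h : (a :: L).SortedGE} (h' : (a' :: L).SortedGE)

def replaceZeros (z z' : ℕ) (hlen : a + z' = a' + z) (hL : ∀ x ∈ L, x ≤ z')
    (T : SemistandardYoungTableau (ofRowLens (a :: L) h)) :
    SemistandardYoungTableau (ofRowLens (a' :: L) h') where
  entry i j := if i = 0 then (if j < z' then 0 else T 0 (j - z' + z)) else T i j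
  row_weak' := by
    rintro (_ | i) j₁ j₂ hj hcell
    · have hj₂ := mem_ofRowLens_cons_zero.mp hcell
      simp only [if_true]
      split_ifs <;> first | omega | exact Nat.zero_le _ |
        exact T.row_weak_of_le (by omega) (mem_ofRowLens_cons_zero.mpr (by omega))
    · exact T.row_weak hj (mem_ofRowLens_cons_succ_iff.mp hcell)
  col_strict' := by
    rintro i₁ (_ | i₂) j hi hcell
    · omega
    have hcell' : (i₂ + 1, j) ∈ ofRowLens (a :: L) h := mem_ofRowLens_cons_succ_iff.mpr hcell
    rcases i₁ with _ | i₁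
    · have hj := lt_of_mem_ofRowLens_cons_succ hL hcell
      have := T.le_entry hcell'
      simp only [if_true, if_pos hj, Nat.add_one_ne_zero, if_false]
      omega
    · simpa only [Nat.add_one_ne_zero, if_false] using T.col_strict hi hcell'
  zeros' := by
    rintro (_ | i) j hcell
    · have hj : a' ≤ j := le_of_not_gt (hcell ∘ mem_ofRowLens_cons_zero.mpr)
      simp only [if_true]
      split_ifs
      · rfl
      · exact T.zeros (mt mem_ofRowLens_cons_zero.mp (by omega))
    · exact T.zeros (mt mem_ofRowLens_cons_succ_iff.mp hcell)

variable {z z' : ℕ} {hlen : a + z' = a' + z} {hL : ∀ x ∈ L, x ≤ z'}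
  (T : SemistandardYoungTableau (ofRowLens (a :: L) h))

theorem replaceZeros_apply_zero (j : ℕ) :
    replaceZeros h' z z' hlen hL T 0 j = if j < z' then 0 else T 0 (j - z' + z) := rfl

theorem entryCount_replaceZeros_zero (hz : z ≤ a) (hT : entryCount _ T 0 = z) :
    entryCount _ (replaceZeros h' z z' hlen hL T) 0 = z' := by
  refine eq_of_forall_lt_iff fun j => ?_
  rw [← SemistandardYoungTableau.mem_and_entry_eq_zero_iff, replaceZeros_apply_zero,
    mem_ofRowLens_cons_zero]
  split_ifs with hj
  · simp only [and_true, hj, iff_true]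
    omega
  · have := T.mem_and_entry_eq_zero_iff (j - z' + z)
    rw [mem_ofRowLens_cons_zero, hT] at this
    omega

theorem entryCount_replaceZeros_le {e : ℕ} (he : e ≠ 0) :
    entryCount _ (replaceZeros h' z z' hlen hL T) e ≤ entryCount _ T e := by
  set S := replaceZeros h' z z' hlen hL T
  have hrow : ∀ j, S 0 j = e → z' ≤ j := fun j hj => by
    rw [replaceZeros_apply_zero] at hj
    split_ifs at hj <;> omega
  refine Finset.card_le_card_of_injOn (fun c => if c.1 = 0 then (0, c.2 - z' + z) else c)
    ?_ ?_
  · rintro ⟨_ | i, j⟩ hc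
    all_goals
      simp only [Finset.coe_filter, Set.mem_ofPred_eq, mem_cells] at hc ⊢
      obtain ⟨hcell, hval⟩ := hc
    · have := hrow j hval
      rw [replaceZeros_apply_zero, if_neg (by omega)] at hval
      have := mem_ofRowLens_cons_zero.mp hcell
      exact ⟨mem_ofRowLens_cons_zero.mpr (by omega), hval⟩
    · exact ⟨mem_ofRowLens_cons_succ_iff.mp hcell, hval⟩
  · rintro ⟨_ | i₁, j₁⟩ hc₁ ⟨_ | i₂, j₂⟩ hc₂ heq
    all_goals
      simp only [Finset.coe_filter, Set.mem_ofPred_eq, mem_cells] at hc₁ hc₂ heq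
      simp only [Nat.add_one_ne_zero, if_false, if_true, Prod.mk.injEq] at heq
    · have := hrow j₁ hc₁.2
      have := hrow j₂ hc₂.2
      simp only [Prod.mk.injEq, true_and]
      omega
    all_goals simp_all

theorem replaceZeros_replaceZeros (hT : entryCount _ T 0 = z)
    (hL₀ : ∀ x ∈ L, x ≤ z) :
    replaceZeros h z' z hlen.symm hL₀ (replaceZeros h' z z' hlen hL T) = T := by
  refine SemistandardYoungTableau.ext fun i j => ?_
  rcases i with _ | i
  · rw [replaceZeros_apply_zero, replaceZeros_apply_zero]
    split_ifs with hj hj'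
    · have := T.mem_and_entry_eq_zero_iff j
      rw [mem_ofRowLens_cons_zero, hT] at this
      exact (this.mpr hj).2.symm
    · omega
    · rw [show j - z + z' - z' + z = j by omega]
  · rfl

theorem entryCount_replaceZeros (hT : entryCount _ T 0 = z) (hL₀ : ∀ x ∈ L, x ≤ z) {e : ℕ}
    (he : e ≠ 0) : entryCount _ (replaceZeros h' z z' hlen hL T) e = entryCount _ T e := by
  refine le_antisymm (entryCount_replaceZeros_le h' T he) ?_
  calc entryCount _ T e
      = entryCount _ (replaceZeros h z' z hlen.symm hL₀ (replaceZeros h' z z' hlen hL T)) e := by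
        rw [replaceZeros_replaceZeros h' T hT hL₀]
    _ ≤ _ := entryCount_replaceZeros_le h _ he

theorem entryCount_replaceZeros_eq_of_forall {α α' : ℕ → ℕ} (hα : α 0 = z) (hα' : α' 0 = z')
    (hαα' : ∀ e ≠ 0, α e = α' e) (hz : z ≤ a) (hL₀ : ∀ x ∈ L, x ≤ z)
    (hT : ∀ e, entryCount _ T e = α e) (e : ℕ) :
    entryCount _ (replaceZeros h' z z' hlen hL T) e = α' e := by
  rcases eq_or_ne e 0 with rfl | he
  · rw [entryCount_replaceZeros_zero h' T hz (hα ▸ hT 0), hα']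
  · rw [entryCount_replaceZeros h' T (hα ▸ hT 0) hL₀ he, hT, hαα' e he]

end ReplaceZeros

theorem kostka_ofRowLens_cons_eq {a a' z z' : ℕ} {L : List ℕ} (h : (a :: L).SortedGE)
    (h' : (a' :: L).SortedGE) (hlen : a + z' = a' + z) (hz : z ≤ a) (hL : ∀ x ∈ L, x ≤ z)
    (hL' : ∀ x ∈ L, x ≤ z') {α α' : ℕ → ℕ} (hα : α 0 = z) (hα' : α' 0 = z')
    (hαα' : ∀ e ≠ 0, α e = α' e) :
    kostka (YoungDiagram.ofRowLens (a :: L) h) α =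
      kostka (YoungDiagram.ofRowLens (a' :: L) h') α' := by
  have hz' : z' ≤ a' := by omega
  exact Nat.card_congr
    { toFun T := ⟨replaceZeros h' z z' hlen hL' T,
        entryCount_replaceZeros_eq_of_forall h' T hα hα' hαα' hz hL T.2⟩
      invFun T := ⟨replaceZeros h z' z hlen.symm hL T,
        entryCount_replaceZeros_eq_of_forall h T hα' hα (fun e he => (hαα' e he).symm) hz' hL'
          T.2⟩
      left_inv T := Subtype.ext <|
        replaceZeros_replaceZeros (hlen := hlen) (hL := hL') h' T.1 (hα ▸ T.2 0) hL
      right_inv T := Subtype.ext <|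
        replaceZeros_replaceZeros (hlen := hlen.symm) (hL := hL) h T.1 (hα' ▸ T.2 0) hL' }

theorem stmt18_general (k m : ℕ) (L : List ℕ) (hsum : L.sum = m) (hmk : m ≤ k)
    (n n' : ℕ) (hn : max (2 * k) (m + L.headI) ≤ n) (hn' : max (2 * k) (m + L.headI) ≤ n')
    (h1 : ((n - m) :: L).Pairwise (· ≥ ·)) (h2 : ((n' - m) :: L).Pairwise (· ≥ ·)) :
    kostka (YoungDiagram.ofRowLens ((n - m) :: L) (List.sortedGE_iff_pairwise.mpr h1)) (typeNK n k) =
      kostka (YoungDiagram.ofRowLens ((n' - m) :: L) (List.sortedGE_iff_pairwise.mpr h2)) (typeNK n' k) := by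
  have hkn : 2 * k ≤ n := le_of_max_le_left hn
  have hkn' : 2 * k ≤ n' := le_of_max_le_left hn'
  have hL_le : ∀ x ∈ L, x ≤ k := fun x hx =>
    (List.le_sum_of_mem hx).trans (hsum.trans_le hmk)
  exact kostka_ofRowLens_cons_eq _ _ (z := n - k) (z' := n' - k) (by omega) (by omega)
    (fun x hx => (hL_le x hx).trans (by omega)) (fun x hx => (hL_le x hx).trans (by omega))
    (by simp [typeNK]) (by simp [typeNK]) fun e he => by simp [typeNK, he]

/-- Fix a positive integer `k` and a partition `λ = (λ₁,…,λ_l) ⊢ m` with `m ≤ k`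
(given as a sorted list `L` of positive parts). For all `n, n' ≥ max(2k, m+λ₁)`, the
Kostka numbers satisfy `K_{λ[n],α(n,k)} = K_{λ[n'],α(n',k)}`, where
`λ[n] = (n−m,λ₁,…,λ_l)` and `α(n,k) = (n−k,1,…,1)` with `k` ones. -/
theorem stmt18 (k m : ℕ) (hk : 0 < k) (L : List ℕ) (hL : L.Pairwise (· ≥ ·))
    (hpos : ∀ x ∈ L, 0 < x) (hsum : L.sum = m) (hmk : m ≤ k)
    (n n' : ℕ) (hn : max (2 * k) (m + L.headI) ≤ n) (hn' : max (2 * k) (m + L.headI) ≤ n')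
    (h1 : ((n - m) :: L).Pairwise (· ≥ ·)) (h2 : ((n' - m) :: L).Pairwise (· ≥ ·)) :
    kostka (YoungDiagram.ofRowLens ((n - m) :: L) (List.sortedGE_iff_pairwise.mpr h1)) (typeNK n k) =
      kostka (YoungDiagram.ofRowLens ((n' - m) :: L) (List.sortedGE_iff_pairwise.mpr h2)) (typeNK n' k) :=
  stmt18_general k m L hsum hmk n n' hn hn' h1 h2
end
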